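/- arXiv:2005.02256 — 2 statements merged into one kernel-verified Lean document; each statement's English description precedes it below -/
import Mathlib

section
/- Let E, F, G be Hilbert spaces, f : E → G and g : F → G bounded linear operators. If there exists c > 0 such that ‖f* x‖ ≤ c·‖g* x‖ for all x in G, then the range of f is contained in the range of g. -/
/-!
For `u ∈ E`, the functional `g* x ↦ ⟪u, f* x⟫` on the range of `g*` is well defined and bounded
by `c‖u‖`, because `‖f* x‖ ≤ c‖g* x‖`. Hahn–Banach extends it to all of `F`, and the Riesz
representative `v` of the extension satisfies `⟪g v, x⟫ = ⟪v, g* x⟫ = ⟪f u, x⟫` for every `x`,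
i.e. `g v = f u`.
-/

open ContinuousLinearMap

theorem LinearMap.exists_comp_rangeRestrict_eq_of_ker_le {R M M₂ N : Type*} [Ring R]
    [AddCommGroup M] [Module R M] [AddCommGroup M₂] [Module R M₂] [AddCommGroup N] [Module R N]
    (A : M →ₗ[R] M₂) (ψ : M →ₗ[R] N) (h : LinearMap.ker A ≤ LinearMap.ker ψ) :
    ∃ φ : LinearMap.range A →ₗ[R] N, φ ∘ₗ A.rangeRestrict = ψ :=
  ⟨(LinearMap.ker A).liftQ ψ h ∘ₗ A.quotKerEquivRange.symm.toLinearMap, LinearMap.ext fun x ↦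
    congrArg ((LinearMap.ker A).liftQ ψ h)
      (A.quotKerEquivRange.symm_apply_apply (Submodule.Quotient.mk x))⟩

theorem exists_strongDual_comp_eq_of_norm_le {𝕜 V W : Type*} [RCLike 𝕜]
    [AddCommGroup V] [Module 𝕜 V] [NormedAddCommGroup W] [NormedSpace 𝕜 W]
    (A : V →ₗ[𝕜] W) (ψ : V →ₗ[𝕜] 𝕜) (C : ℝ) (h : ∀ x, ‖ψ x‖ ≤ C * ‖A x‖) :
    ∃ Φ : StrongDual 𝕜 W, ∀ x, Φ (A x) = ψ x := by
  have hker : LinearMap.ker A ≤ LinearMap.ker ψ := fun x hx ↦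
    norm_le_zero_iff.mp <| by simpa [LinearMap.mem_ker.mp hx] using h x
  obtain ⟨φ, hφ⟩ := A.exists_comp_rangeRestrict_eq_of_ker_le ψ hker
  have hφ_apply (x : V) : φ (A.rangeRestrict x) = ψ x := LinearMap.congr_fun hφ x
  have hφ_bound : ∀ s, ‖φ s‖ ≤ C * ‖s‖ := by
    rintro ⟨_, x, rfl⟩
    have hx := h x
    rw [← hφ_apply] at hx
    exact hx
  obtain ⟨Φ, hΦ, -⟩ := exists_extension_norm_eq _ (φ.mkContinuous C hφ_bound)
  exact ⟨Φ, fun x ↦ (hΦ (A.rangeRestrict x)).trans (hφ_apply x)⟩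

theorem ContinuousLinearMap.range_subset_range_of_norm_adjoint_le {𝕜 E F G : Type*} [RCLike 𝕜]
    [NormedAddCommGroup E] [InnerProductSpace 𝕜 E] [CompleteSpace E]
    [NormedAddCommGroup F] [InnerProductSpace 𝕜 F] [CompleteSpace F]
    [NormedAddCommGroup G] [InnerProductSpace 𝕜 G] [CompleteSpace G]
    (f : E →L[𝕜] G) (g : F →L[𝕜] G) (c : ℝ) (h : ∀ x, ‖adjoint f x‖ ≤ c * ‖adjoint g x‖) :
    Set.range f ⊆ Set.range g := by
  rintro _ ⟨u, rfl⟩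
  obtain ⟨Φ, hΦ⟩ := exists_strongDual_comp_eq_of_norm_le (adjoint g : G →ₗ[𝕜] F)
    ((innerSL 𝕜 u).comp (adjoint f) : G →ₗ[𝕜] 𝕜) (c * ‖u‖) fun x ↦
      calc ‖inner 𝕜 u (adjoint f x)‖ ≤ ‖u‖ * ‖adjoint f x‖ := norm_inner_le_norm _ _
        _ ≤ ‖u‖ * (c * ‖adjoint g x‖) := by gcongr; exact h x
        _ = c * ‖u‖ * ‖adjoint g x‖ := by ring
  refine ⟨(InnerProductSpace.toDual 𝕜 F).symm Φ, ext_inner_right 𝕜 fun x ↦ ?_⟩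
  rw [← adjoint_inner_right, InnerProductSpace.toDual_symm_apply]
  exact (hΦ x).trans (adjoint_inner_right f u x)

/-- Douglas-type lemma (one direction): if ‖f* x‖ ≤ c‖g* x‖ for all x then
Im f ⊆ Im g. -/
theorem stmt_0
    {E F G : Type*}
    [NormedAddCommGroup E] [InnerProductSpace ℝ E] [CompleteSpace E]
    [NormedAddCommGroup F] [InnerProductSpace ℝ F] [CompleteSpace F]
    [NormedAddCommGroup G] [InnerProductSpace ℝ G] [CompleteSpace G]
    (f : E →L[ℝ] G) (g : F →L[ℝ] G)
    (h : ∃ c > (0 : ℝ), ∀ x : G,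
      ‖ContinuousLinearMap.adjoint f x‖ ≤ c * ‖ContinuousLinearMap.adjoint g x‖) :
    Set.range f ⊆ Set.range g := by
  obtain ⟨c, -, hc⟩ := h
  exact f.range_subset_range_of_norm_adjoint_le g c hc
end

section
/- Let E, F, G be Hilbert spaces, f : E → G and g : F → G bounded linear operators. If the range of f is contained in the range of g, then there exists c > 0 such that ‖f* x‖ ≤ c·‖g* x‖ for all x ∈ G. -/
/-!
Restricted to `(ker g)ᗮ`, the operator `g` becomes injective with the same range, so `f` lifts
through it to a linear map `T` with `f = g ∘ T`; the graph of `T` is closed, hence `T` is bounded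
by the closed graph theorem. Taking adjoints, `f† = T† ∘ g†`, so `‖f† x‖ ≤ ‖T‖ ‖g† x‖`.
-/

open Filter Topology

namespace ContinuousLinearMap

section Banach

variable {𝕜 E F G : Type*} [NontriviallyNormedField 𝕜]
  [NormedAddCommGroup E] [NormedSpace 𝕜 E] [CompleteSpace E]
  [NormedAddCommGroup F] [NormedSpace 𝕜 F] [CompleteSpace F]
  [NormedAddCommGroup G] [NormedSpace 𝕜 G]

theorem exists_eq_comp_of_injective_of_range_subset {f : E →L[𝕜] G} {g : F →L[𝕜] G}
    (hg : Function.Injective g) (h : Set.range f ⊆ Set.range g) :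
    ∃ T : E →L[𝕜] F, f = g.comp T := by
  let T : E →ₗ[𝕜] F := (LinearEquiv.ofInjective (g : F →ₗ[𝕜] G) hg).symm.toLinearMap ∘ₗ
    LinearMap.codRestrict _ (f : E →ₗ[𝕜] G) fun e => h ⟨e, rfl⟩
  have hgT : ∀ e, g (T e) = f e := fun e =>
    congrArg Subtype.val ((LinearEquiv.ofInjective _ hg).apply_symm_apply _)
  have hT : Continuous T := by
    refine T.continuous_of_seq_closed_graph fun u x y hux hTy => hg ?_
    have hlim : Tendsto (fun n => f (u n)) atTop (𝓝 (g y)) := by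
      simpa only [Function.comp_def, hgT] using (g.continuous.tendsto y).comp hTy
    rw [hgT, tendsto_nhds_unique hlim ((f.continuous.tendsto x).comp hux)]
  exact ⟨⟨T, hT⟩, ext fun e => (hgT e).symm⟩

end Banach

section Hilbert

variable {𝕜 E F G : Type*} [RCLike 𝕜]
  [NormedAddCommGroup E] [InnerProductSpace 𝕜 E] [CompleteSpace E]
  [NormedAddCommGroup F] [InnerProductSpace 𝕜 F]
  [NormedAddCommGroup G] [InnerProductSpace 𝕜 G]

theorem injective_comp_subtypeL_orthogonal_ker (g : F →L[𝕜] G) :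
    Function.Injective (g.comp g.kerᗮ.subtypeL) :=
  (injective_iff_map_eq_zero _).mpr fun _ hy =>
    (Submodule.mem_left_iff_eq_zero_of_disjoint g.ker.orthogonal_disjoint).mp hy

variable [CompleteSpace F]

theorem range_comp_subtypeL_orthogonal_ker (g : F →L[𝕜] G) :
    Set.range (g.comp g.kerᗮ.subtypeL) = Set.range g := by
  refine subset_antisymm (Set.range_comp_subset_range g.kerᗮ.subtypeL g) ?_
  rintro _ ⟨y, rfl⟩
  obtain ⟨k, hk, z, hz, rfl⟩ := g.ker.exists_add_mem_mem_orthogonal y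
  exact ⟨⟨z, hz⟩, by simp [show g k = 0 from hk]⟩

theorem exists_eq_comp_of_range_subset {f : E →L[𝕜] G} {g : F →L[𝕜] G}
    (h : Set.range f ⊆ Set.range g) :
    ∃ T : E →L[𝕜] F, f = g.comp T := by
  obtain ⟨T, hT⟩ := exists_eq_comp_of_injective_of_range_subset
    (injective_comp_subtypeL_orthogonal_ker g) (h.trans (range_comp_subtypeL_orthogonal_ker g).ge)
  exact ⟨g.kerᗮ.subtypeL.comp T, hT⟩

theorem norm_adjoint_apply_le_of_eq_comp [CompleteSpace G] {f : E →L[𝕜] G} {g : F →L[𝕜] G}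
    {T : E →L[𝕜] F} (hfT : f = g.comp T) (x : G) :
    ‖adjoint f x‖ ≤ ‖T‖ * ‖adjoint g x‖ := by
  rw [hfT, adjoint_comp, comp_apply, ← LinearIsometryEquiv.norm_map adjoint T]
  exact (adjoint T).le_opNorm _

end Hilbert

end ContinuousLinearMap

/-- Douglas-type lemma (converse direction): if Im f ⊆ Im g then there is c > 0
with ‖f* x‖ ≤ c‖g* x‖ for all x. -/
theorem stmt_1
    {E F G : Type*}
    [NormedAddCommGroup E] [InnerProductSpace ℝ E] [CompleteSpace E]
    [NormedAddCommGroup F] [InnerProductSpace ℝ F] [CompleteSpace F]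
    [NormedAddCommGroup G] [InnerProductSpace ℝ G] [CompleteSpace G]
    (f : E →L[ℝ] G) (g : F →L[ℝ] G)
    (h : Set.range f ⊆ Set.range g) :
    ∃ c > (0 : ℝ), ∀ x : G,
      ‖ContinuousLinearMap.adjoint f x‖ ≤ c * ‖ContinuousLinearMap.adjoint g x‖ := by
  obtain ⟨T, hfT⟩ := ContinuousLinearMap.exists_eq_comp_of_range_subset h
  refine ⟨‖T‖ + 1, by positivity, fun x => ?_⟩
  calc ‖ContinuousLinearMap.adjoint f x‖ ≤ ‖T‖ * ‖ContinuousLinearMap.adjoint g x‖ :=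
        ContinuousLinearMap.norm_adjoint_apply_le_of_eq_comp hfT x
    _ ≤ (‖T‖ + 1) * ‖ContinuousLinearMap.adjoint g x‖ := by gcongr; linarith
end
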